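/- For every A > 0 there exist a constant C and an integer m₀ such that the following holds for all integers m ≥ m₀. Suppose τ₀, τ₂ > 0 and β, ζ ∈ ℝ satisfy |β| ≤ A, |ζ| ≤ A, log τ₀ = −√(m/2) − (3/4)·log m + β, and τ₂ = τ₀·(√(m/2) − (1/4)·log m − ζ). If a₀, a₂ ∈ ℝ satisfy m·sin(τ₀)·a₀ + 2·sin(τ₂)·a₂ = 0 and a₀ ≠ 0, then |1 − (a₂/a₀)·(1/Φ₂(τ₂))| ≤ C/√m, where Φ₂(r) = 1 + cos(r)·log tan(r/2). -/

import Mathlib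

/- STATEMENT 15: For every A > 0 there are C and m₀ such that for all m ≥ m₀:
if τ₀, τ₂ > 0 and β, ζ with |β| ≤ A, |ζ| ≤ A satisfy
log τ₀ = −√(m/2) − (3/4)·log m + β and τ₂ = τ₀·(√(m/2) − (1/4)·log m − ζ), and if
a₀ ≠ 0, a₂ satisfy m·sin(τ₀)·a₀ + 2·sin(τ₂)·a₂ = 0, then
|1 − (a₂/a₀)·(1/Φ₂(τ₂))| ≤ C/√m, where Φ₂(r) = 1 + cos(r)·log tan(r/2). -/

noncomputable section
open Real Set

/-- The radial profile `Φ₂(r) = 1 + cos(r)·log tan(r/2)`. -/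
def Phi2prof (r : ℝ) : ℝ := 1 + Real.cos r * Real.log (Real.tan (r / 2))

open Filter in
set_option maxHeartbeats 1000000 in
private lemma aux_ev15 (A : ℝ) (hA : 0 < A) :
    ∀ᶠ x : ℝ in atTop,
      A + (Real.log 2 + 2 * Real.log x) / 4 ≤ x / 2 ∧
      4 * A ≤ Real.log 2 + 2 * Real.log x ∧
      2 * (A + 5) ≤ x ∧
      (Real.log 2 + 2 * Real.log x) ^ 2 / 8 + (Real.log 2 + 2 * Real.log x) * A / 2 ≤ x ∧
      Real.exp A * x * Real.exp (-x) ≤ 1 / 2 ∧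
      2 * x * (Real.exp A * x * Real.exp (-x)) ^ 2 ≤ 1 ∧
      (Real.exp A * x * Real.exp (-x)) ^ 2 *
        (x + (Real.log 2 + 2 * Real.log x) + A + 5) ≤ 2 := by
  have hx0 : ∀ᶠ x : ℝ in atTop, (1 : ℝ) ≤ x := eventually_ge_atTop 1
  have hxA : ∀ᶠ x : ℝ in atTop, 8 * A + 100 ≤ x := eventually_ge_atTop _
  have hlogA : ∀ᶠ x : ℝ in atTop, 2 * A ≤ Real.log x :=
    Real.tendsto_log_atTop.eventually_ge_atTop _
  have t1 : Tendsto (fun x : ℝ => Real.log x ^ 1 / (1 * x + 0)) atTop (nhds 0) :=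
    Real.tendsto_pow_log_div_mul_add_atTop 1 0 1 one_ne_zero
  have t2 : Tendsto (fun x : ℝ => Real.log x ^ 2 / (1 * x + 0)) atTop (nhds 0) :=
    Real.tendsto_pow_log_div_mul_add_atTop 1 0 2 one_ne_zero
  have h1 : ∀ᶠ x : ℝ in atTop, Real.log x ^ 1 / (1 * x + 0) < 1 / (16 * (A + 1)) :=
    t1.eventually_lt_const (by positivity)
  have h2 : ∀ᶠ x : ℝ in atTop, Real.log x ^ 2 / (1 * x + 0) < 1 / 16 :=
    t2.eventually_lt_const (by norm_num)
  have t3 : Tendsto (fun x : ℝ => x ^ 1 * Real.exp (-x)) atTop (nhds 0) :=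
    Real.tendsto_pow_mul_exp_neg_atTop_nhds_zero 1
  have t4 : Tendsto (fun x : ℝ => x ^ 3 * Real.exp (-x)) atTop (nhds 0) :=
    Real.tendsto_pow_mul_exp_neg_atTop_nhds_zero 3
  have h3 : ∀ᶠ x : ℝ in atTop, x ^ 1 * Real.exp (-x) < Real.exp (-A) / 2 :=
    t3.eventually_lt_const (by positivity)
  have h4 : ∀ᶠ x : ℝ in atTop, x ^ 3 * Real.exp (-x) < Real.exp (-(2*A)) / 2 :=
    t4.eventually_lt_const (by positivity)
  filter_upwards [hx0, hxA, hlogA, h1, h2, h3, h4] with x hx0 hxA hlogA h1 h2 h3 h4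
  have hxpos : (0:ℝ) < x := by linarith
  have hlog2 : Real.log 2 ≤ 1 := by
    have := Real.log_le_sub_one_of_pos (by norm_num : (0:ℝ) < 2); linarith
  have hlog2' : (0:ℝ) ≤ Real.log 2 := Real.log_nonneg (by norm_num)
  have hlx0 : (0:ℝ) ≤ Real.log x := Real.log_nonneg hx0
  have hl1 : (16 * (A + 1)) * Real.log x ≤ x := by
    have := (div_lt_iff₀ (by linarith : (0:ℝ) < 1 * x + 0)).1 h1
    have hA1 : (0:ℝ) < 16 * (A+1) := by positivity
    rw [pow_one] at this
    calc (16 * (A + 1)) * Real.log x ≤ (16*(A+1)) * (1 / (16 * (A + 1)) * (1 * x + 0)) := by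
          nlinarith
      _ = x := by field_simp; ring
  have hl1' : Real.log x ≤ x / 16 := by nlinarith
  have hl1A : A * Real.log x ≤ x / 16 := by nlinarith
  have hl2 : Real.log x ^ 2 ≤ x / 16 := by
    have := (div_lt_iff₀ (by linarith : (0:ℝ) < 1 * x + 0)).1 h2
    nlinarith
  have he3 : x * Real.exp (-x) < Real.exp (-A) / 2 := by
    have := h3; rw [pow_one] at this; exact this
  have hexp : Real.exp A * x * Real.exp (-x) ≤ 1/2 := by
    have hEA : (0:ℝ) < Real.exp A := Real.exp_pos _
    have : Real.exp A * (x * Real.exp (-x)) ≤ Real.exp A * (Real.exp (-A)/2) := by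
      nlinarith
    calc Real.exp A * x * Real.exp (-x) = Real.exp A * (x * Real.exp (-x)) := by ring
      _ ≤ Real.exp A * (Real.exp (-A)/2) := this
      _ = 1/2 := by
          rw [show Real.exp A * (Real.exp (-A)/2) = Real.exp A * Real.exp (-A) / 2 by ring,
            ← Real.exp_add]; simp
  have hx3 : x ^ 3 * Real.exp (-x) ≤ Real.exp (-(2*A)) / 2 := h4.le
  have hT2 : (Real.exp A * x * Real.exp (-x)) ^ 2 * x ≤ x ^ 2 * Real.exp (-x) / 2 := by
    have hE : (0:ℝ) < Real.exp (-x) := Real.exp_pos _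
    have hEA : (0:ℝ) < Real.exp A := Real.exp_pos _
    have e1 : (Real.exp A * x * Real.exp (-x)) ^ 2 * x
        = Real.exp (2*A) * (x ^ 3 * Real.exp (-x)) * Real.exp (-x) := by
      rw [show Real.exp (2*A) = Real.exp A * Real.exp A by rw [← Real.exp_add]; ring_nf]
      ring
    rw [e1]
    have e2 : Real.exp (2*A) * (x ^ 3 * Real.exp (-x)) ≤ 1/2 := by
      have : Real.exp (2*A) * (x^3 * Real.exp (-x)) ≤ Real.exp (2*A) * (Real.exp (-(2*A))/2) := by
        nlinarith [Real.exp_pos (2*A)]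
      calc Real.exp (2*A) * (x^3*Real.exp (-x)) ≤ Real.exp (2*A) * (Real.exp (-(2*A))/2) := this
        _ = 1/2 := by
            rw [show Real.exp (2*A) * (Real.exp (-(2*A))/2)
                = Real.exp (2*A) * Real.exp (-(2*A)) / 2 by ring,
              ← Real.exp_add]; simp
    calc Real.exp (2*A) * (x ^ 3 * Real.exp (-x)) * Real.exp (-x)
        ≤ (1/2) * Real.exp (-x) := mul_le_mul_of_nonneg_right e2 hE.le
      _ ≤ x ^ 2 * Real.exp (-x) / 2 := by
          have h1x : (1:ℝ) ≤ x ^ 2 := by nlinarith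
          nlinarith [mul_le_mul_of_nonneg_right h1x hE.le]
  refine ⟨by nlinarith, by linarith, by linarith, by nlinarith, hexp, ?_, ?_⟩
  all_goals {
    have hE : (0:ℝ) < Real.exp (-x) := Real.exp_pos _
    have hEA2 : Real.exp (-(2*A)) ≤ 1 := Real.exp_le_one_iff.2 (by linarith)
    have hx2 : x ^ 2 * Real.exp (-x) ≤ x ^ 3 * Real.exp (-x) := by
      nlinarith [mul_nonneg (mul_nonneg (sq_nonneg x) hE.le) (sub_nonneg.2 hx0)]
    have hkey : (Real.exp A * x * Real.exp (-x)) ^ 2 * x ≤ 1/4 := by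
      linarith [hT2, hx2, hx3, hEA2]
    have hT0 : (0:ℝ) ≤ (Real.exp A * x * Real.exp (-x)) ^ 2 := sq_nonneg _
    have hLx : Real.log 2 + 2 * Real.log x ≤ x := by nlinarith
    have hAx : A + 5 ≤ x := by linarith
    nlinarith [hT0, hkey]
  }

open Filter in
private lemma sqrt_half_tendsto15 :
    Tendsto (fun m : ℕ => Real.sqrt ((m : ℝ) / 2)) atTop atTop := by
  refine tendsto_atTop_atTop.2 fun b => ?_
  obtain ⟨n, hn⟩ := exists_nat_ge (2 * b ^ 2)
  refine ⟨n, fun m hm => ?_⟩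
  rcases le_or_gt b 0 with hb | hb
  · exact hb.trans (Real.sqrt_nonneg _)
  · have hmn : (n : ℝ) ≤ m := Nat.cast_le.2 hm
    have : b ^ 2 ≤ (m : ℝ) / 2 := by linarith
    calc b = Real.sqrt (b ^ 2) := (Real.sqrt_sq hb.le).symm
      _ ≤ Real.sqrt ((m : ℝ) / 2) := Real.sqrt_le_sqrt this

set_option maxHeartbeats 1000000 in
theorem statement15 (A : ℝ) (hA : 0 < A) :
    ∃ C : ℝ, ∃ m₀ : ℕ, ∀ m : ℕ, m₀ ≤ m →
      ∀ τ₀ τ₂ β ζ a₀ a₂ : ℝ,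
        0 < τ₀ → 0 < τ₂ → |β| ≤ A → |ζ| ≤ A →
        Real.log τ₀ = -Real.sqrt ((m : ℝ) / 2) - (3 / 4) * Real.log m + β →
        τ₂ = τ₀ * (Real.sqrt ((m : ℝ) / 2) - (1 / 4) * Real.log m - ζ) →
        (m : ℝ) * Real.sin τ₀ * a₀ + 2 * Real.sin τ₂ * a₂ = 0 →
        a₀ ≠ 0 →
        |1 - (a₂ / a₀) * (1 / Phi2prof τ₂)| ≤ C / Real.sqrt m := by
  obtain ⟨m₀, hm₀⟩ :=
    Filter.eventually_atTop.mp (sqrt_half_tendsto15.eventually (aux_ev15 A hA))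
  refine ⟨(6 * A + 12) * Real.sqrt 2, m₀, ?_⟩
  intro m hm τ₀ τ₂ β ζ a₀ a₂ hτ₀p hτ₂p hβ hζ hlogτ₀ hτ₂def hbal ha₀
  obtain ⟨c1, c2, c3, c5, c6, c7, c8⟩ := hm₀ m hm
  set s := Real.sqrt ((m : ℝ) / 2) with hs
  set L := Real.log (m : ℝ) with hLdef
  have hβ' := abs_le.mp hβ
  have hζ' := abs_le.mp hζ
  have hspos : 0 < s := by linarith only [c3, hA]
  have hs2 : s ^ 2 = (m : ℝ) / 2 := Real.sq_sqrt (by positivity)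
  have hm2 : (m : ℝ) = 2 * s ^ 2 := by linarith only [hs2]
  have hL : L = Real.log 2 + 2 * Real.log s := by
    rw [hLdef, hm2, Real.log_mul two_ne_zero (by positivity), Real.log_pow]
    push_cast; ring
  rw [← hL] at c1 c2 c5 c8
  clear_value s L
  have hL0 : 0 ≤ L := by linarith only [c2, hA]
  set u := s - L / 4 - ζ with hu
  clear_value u
  have hu1 : s / 2 ≤ u := by rw [hu]; linarith only [c1, hζ'.2]
  have hu2 : u ≤ s := by rw [hu]; linarith only [c2, hζ'.1]
  have hupos : 0 < u := by linarith only [hu1, hspos]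
  have hτ₂u : τ₂ = τ₀ * u := by rw [hτ₂def, hu]; ring
  have hτ₀e : τ₀ = Real.exp (-s - 3 / 4 * L + β) := by
    rw [← Real.exp_log hτ₀p, hlogτ₀]
  have hτ₀T : τ₀ ≤ Real.exp A * Real.exp (-s) := by
    rw [hτ₀e, ← Real.exp_add]
    exact Real.exp_le_exp.2 (by linarith only [hβ'.2, hL0])
  set T := Real.exp A * s * Real.exp (-s) with hT
  have hTpos : 0 < T := by rw [hT]; positivity
  clear_value T
  have hτ₂T : τ₂ ≤ T := by
    rw [hτ₂u, hT]
    calc τ₀ * u ≤ (Real.exp A * Real.exp (-s)) * s :=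
        mul_le_mul hτ₀T hu2 hupos.le (by positivity)
      _ = Real.exp A * s * Real.exp (-s) := by ring
  have hτ₂h : τ₂ ≤ 1 / 2 := le_trans hτ₂T c6
  have hτ₂sq : τ₂ ^ 2 ≤ T ^ 2 := by nlinarith only [hτ₂p, hτ₂T]
  have hu1' : (1 : ℝ) ≤ u := by linarith only [hu1, c3, hA]
  have hτ₀τ₂ : τ₀ ≤ τ₂ := by nlinarith only [hτ₂u, hu1', hτ₀p]
  have hτsq4 : τ₂ ^ 2 ≤ 1 / 4 := by nlinarith only [hτ₂p, hτ₂h]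
  have hs2hi : Real.sin τ₂ ≤ τ₂ := (Real.sin_lt hτ₂p).le
  have hs2lo : τ₂ - τ₂ ^ 3 / 4 ≤ Real.sin τ₂ :=
    by have := Real.sin_gt_sub_cube hτ₂p; linarith [pow_pos hτ₂p 3]
  have hs0hi : Real.sin τ₀ ≤ τ₀ := (Real.sin_lt hτ₀p).le
  have hs0lo : τ₀ - τ₀ ^ 3 / 4 ≤ Real.sin τ₀ :=
    by have := Real.sin_gt_sub_cube hτ₀p; linarith [pow_pos hτ₀p 3]
  have hsin2pos : 0 < Real.sin τ₂ := by
    have h1 : 0 < τ₂ * (1 - τ₂ ^ 2 / 4) :=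
      mul_pos hτ₂p (by linarith only [hτsq4])
    nlinarith only [hs2lo, h1]
  -- express a₂/a₀
  set Q := s ^ 2 * Real.sin τ₀ / Real.sin τ₂ with hQ
  clear_value Q
  have key : a₂ * Real.sin τ₂ = -(s ^ 2 * Real.sin τ₀ * a₀) := by
    linear_combination hbal / 2 - Real.sin τ₀ * a₀ / 2 * hm2
  have hQa : a₂ / a₀ = -Q := by
    rw [hQ]
    field_simp [hsin2pos.ne']
    linear_combination key
  -- V := s^2/u and its bounds
  set V := s ^ 2 / u with hV
  clear_value V
  have hVu : V * u = s ^ 2 := by rw [hV]; exact div_mul_cancel₀ _ hupos.ne'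
  have hVle : V ≤ 2 * s := by
    rw [hV, div_le_iff₀ hupos]
    have := mul_le_mul_of_nonneg_left hu1 (by positivity : (0:ℝ) ≤ 2 * s)
    nlinarith only [this]
  have hVge : s ≤ V := by
    rw [hV, le_div_iff₀ hupos]
    have := mul_le_mul_of_nonneg_left hu2 hspos.le
    nlinarith only [this]
  have hVτ : s ^ 2 * τ₀ = V * τ₂ := by rw [hτ₂u]; linear_combination (-τ₀) * hVu
  -- Q upper bound
  have hQub : Q ≤ V + 2 * s * τ₂ ^ 2 := by
    rw [hQ, div_le_iff₀ hsin2pos]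
    have h0 : (0 : ℝ) ≤ V + 2 * s * τ₂ ^ 2 := by
      have h00 : (0:ℝ) ≤ 2 * s * τ₂ ^ 2 := by positivity
      linarith only [hVge, hspos, h00]
    have m1 : s ^ 2 * Real.sin τ₀ ≤ V * τ₂ := by
      have := mul_le_mul_of_nonneg_left hs0hi (sq_nonneg s)
      linarith only [this, hVτ]
    have m2 : (V + 2 * s * τ₂ ^ 2) * (τ₂ - τ₂ ^ 3 / 4) ≤ (V + 2 * s * τ₂ ^ 2) * Real.sin τ₂ :=
      mul_le_mul_of_nonneg_left hs2lo h0
    have m3 : V * τ₂ ≤ (V + 2 * s * τ₂ ^ 2) * (τ₂ - τ₂ ^ 3 / 4) := by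
      nlinarith only [mul_nonneg (sub_nonneg.2 hVle) (pow_pos hτ₂p 3).le,
        mul_nonneg (mul_nonneg hspos.le (pow_pos hτ₂p 3).le) (sub_nonneg.2 hτsq4),
        mul_nonneg hspos.le (pow_pos hτ₂p 3).le]
    linarith only [m1, m2, m3]
  -- Q lower bound
  have hQlb : V - 2 * s * τ₂ ^ 2 ≤ Q := by
    rw [hQ, le_div_iff₀ hsin2pos]
    have h0 : (0 : ℝ) ≤ V - 2 * s * τ₂ ^ 2 := by
      nlinarith only [hVge, mul_nonneg hspos.le (sub_nonneg.2 hτsq4), hspos]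
    have m1 : (V - 2 * s * τ₂ ^ 2) * Real.sin τ₂ ≤ (V - 2 * s * τ₂ ^ 2) * τ₂ :=
      mul_le_mul_of_nonneg_left hs2hi h0
    have hτ₀sq : τ₀ ^ 2 ≤ τ₂ ^ 2 := by nlinarith only [hτ₀τ₂, hτ₀p]
    have m2 : s ^ 2 * (τ₀ - τ₀ ^ 3 / 4) ≤ s ^ 2 * Real.sin τ₀ :=
      mul_le_mul_of_nonneg_left hs0lo (sq_nonneg s)
    have hVτ₂0 : 0 ≤ V * τ₂ := mul_nonneg (hspos.le.trans hVge) hτ₂p.le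
    have m3 : (V - 2 * s * τ₂ ^ 2) * τ₂ ≤ s ^ 2 * (τ₀ - τ₀ ^ 3 / 4) := by
      have e1 : s ^ 2 * τ₀ ^ 3 = (V * τ₂) * τ₀ ^ 2 := by linear_combination τ₀ ^ 2 * hVτ
      have ha : V * τ₂ * τ₀ ^ 2 ≤ V * τ₂ * τ₂ ^ 2 :=
        mul_le_mul_of_nonneg_left hτ₀sq hVτ₂0
      have hb : 0 ≤ (2 * s - V) * τ₂ ^ 3 :=
        mul_nonneg (sub_nonneg.2 hVle) (pow_pos hτ₂p 3).le
      linarith only [e1, ha, hb, hVτ, mul_nonneg hspos.le (pow_pos hτ₂p 3).le]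
    linarith only [m1, m2, m3]
  have h2sτ : 2 * s * τ₂ ^ 2 ≤ 1 := by
    have := mul_le_mul_of_nonneg_left hτ₂sq (by positivity : (0:ℝ) ≤ 2 * s)
    linarith only [this, c7]
  -- V - s - L/4 bound
  have hDu : (V - s - L / 4) * u = s * ζ + L ^ 2 / 16 + L * ζ / 4 := by
    linear_combination hVu - (s + L / 4) * hu
  have hDd : L ^ 2 / 16 + L * A / 4 ≤ s / 2 := by linarith only [c5]
  have hDub : V - s - L / 4 ≤ 2 * A + 1 := by
    nlinarith only [hDu, hDd, hu1, hupos, hζ'.1, hζ'.2, hL0, hspos, hA]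
  have hDlb : -(2 * A + 1) ≤ V - s - L / 4 := by
    nlinarith only [hDu, hDd, hu1, hupos, hζ'.1, hζ'.2, hL0, hspos, hA]
  have hQub2 : Q ≤ s + L / 4 + (2 * A + 2) := by linarith only [hQub, h2sτ, hDub]
  have hQlb2 : s + L / 4 - (2 * A + 2) ≤ Q := by linarith only [hQlb, h2sτ, hDlb]
  -- tan bounds and G
  have hπ : τ₂ / 2 < π / 2 := by linarith only [hτ₂h, Real.pi_gt_three, hτ₂p]
  have htanlo : τ₂ / 2 ≤ Real.tan (τ₂ / 2) :=
    (Real.lt_tan (by linarith only [hτ₂p]) hπ).le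
  have hcoshalf : 1 / 2 ≤ Real.cos (τ₂ / 2) := by
    have := Real.one_sub_sq_div_two_le_cos (x := τ₂ / 2)
    nlinarith only [this, hτsq4]
  have htanhi : Real.tan (τ₂ / 2) ≤ τ₂ := by
    rw [Real.tan_eq_sin_div_cos, div_le_iff₀ (by linarith only [hcoshalf])]
    have h1 : Real.sin (τ₂ / 2) ≤ τ₂ / 2 := (Real.sin_lt (by linarith only [hτ₂p])).le
    have h2 : 0 ≤ τ₂ * (Real.cos (τ₂ / 2) - 1 / 2) :=
      mul_nonneg hτ₂p.le (by linarith only [hcoshalf])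
    nlinarith only [h1, h2]
  have htanpos : 0 < Real.tan (τ₂ / 2) := by linarith only [htanlo, hτ₂p]
  set G := Real.log (Real.tan (τ₂ / 2)) with hG
  clear_value G
  have hGhi : G ≤ Real.log τ₂ := hG ▸ Real.log_le_log htanpos htanhi
  have hGlo : Real.log τ₂ - Real.log 2 ≤ G := by
    have h1 : Real.log (τ₂ / 2) ≤ G := hG ▸ Real.log_le_log (by linarith only [hτ₂p]) htanlo
    rwa [Real.log_div hτ₂p.ne' two_ne_zero] at h1
  have hlogu_hi : Real.log u ≤ Real.log s := Real.log_le_log hupos hu2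
  have hlogu_lo : Real.log s - Real.log 2 ≤ Real.log u := by
    have h1 : Real.log (s / 2) ≤ Real.log u :=
      Real.log_le_log (by linarith only [hspos]) hu1
    rwa [Real.log_div hspos.ne' two_ne_zero] at h1
  have hlogτ₂ : Real.log τ₂ = -s - 3 / 4 * L + β + Real.log u := by
    rw [hτ₂u, Real.log_mul hτ₀p.ne' hupos.ne', hlogτ₀]
  have hlog2a : Real.log 2 ≤ 1 := by
    have := Real.log_le_sub_one_of_pos (by norm_num : (0:ℝ) < 2); linarith only [this]
  have hlog2b : (0 : ℝ) ≤ Real.log 2 := Real.log_nonneg (by norm_num)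
  have hGhi2 : G ≤ -s - L / 4 + A := by
    linarith only [hGhi, hlogτ₂, hlogu_hi, hL, hβ'.2, hlog2b]
  have hGlo2 : -s - L / 4 - A - 3 ≤ G := by
    linarith only [hGlo, hlogτ₂, hlogu_lo, hL, hβ'.1, hlog2a, hlog2b]
  -- Phi2 bounds
  have hPhi : Phi2prof τ₂ = 1 + Real.cos τ₂ * G := by rw [hG]; rfl
  have hcoslo : 1 - τ₂ ^ 2 / 2 ≤ Real.cos τ₂ := Real.one_sub_sq_div_two_le_cos
  have hcoshi : Real.cos τ₂ ≤ 1 := Real.cos_le_one _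
  have hGneg : G ≤ 0 := by linarith only [hGhi2, c3, hL0, hA]
  have hcosG_lo : G ≤ Real.cos τ₂ * G := by
    have h1 : 0 ≤ (1 - Real.cos τ₂) * (-G) :=
      mul_nonneg (by linarith only [hcoshi]) (by linarith only [hGneg])
    nlinarith only [h1]
  have hcosG_hi : Real.cos τ₂ * G ≤ G + 1 := by
    have hnegG0 : 0 ≤ -G := by linarith only [hGneg]
    have hnegG : -G ≤ s + L + A + 5 := by linarith only [hGlo2, hL0]
    have h1 : (1 - Real.cos τ₂) * (-G) ≤ (τ₂ ^ 2 / 2) * (s + L + A + 5) :=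
      mul_le_mul (by linarith only [hcoslo]) hnegG hnegG0 (by positivity)
    have h2' : τ₂ ^ 2 * (s + L + A + 5) ≤ T ^ 2 * (s + L + A + 5) :=
      mul_le_mul_of_nonneg_right hτ₂sq
        (by linarith only [hspos, hL0, hA] : (0:ℝ) ≤ s + L + A + 5)
    have h2 : (τ₂ ^ 2 / 2) * (s + L + A + 5) ≤ 1 := by linarith only [h2', c8]
    nlinarith only [h1, h2]
  have hPhi_lo : -s - L / 4 - A - 2 ≤ Phi2prof τ₂ := by
    rw [hPhi]; linarith only [hcosG_lo, hGlo2]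
  have hPhi_hi : Phi2prof τ₂ ≤ -s - L / 4 + A + 2 := by
    rw [hPhi]; linarith only [hcosG_hi, hGhi2]
  have hPhi_neg : Phi2prof τ₂ ≤ -(s / 2) := by linarith only [hPhi_hi, c3, hL0, hA]
  have hPhi_lt : Phi2prof τ₂ < 0 := by linarith only [hPhi_neg, hspos]
  have hPhi_ne : Phi2prof τ₂ ≠ 0 := hPhi_lt.ne
  -- final computation
  have hfin : 1 - a₂ / a₀ * (1 / Phi2prof τ₂) = (Phi2prof τ₂ + Q) / Phi2prof τ₂ := by
    rw [hQa]; field_simp; ring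
  rw [hfin, abs_div, abs_of_nonpos hPhi_lt.le]
  have hnum : |Phi2prof τ₂ + Q| ≤ 3 * A + 6 :=
    abs_le.2 ⟨by linarith only [hPhi_lo, hQlb2, hA], by linarith only [hPhi_hi, hQub2, hA]⟩
  have hden : s / 2 ≤ -Phi2prof τ₂ := by linarith only [hPhi_neg]
  have hsm : Real.sqrt (m : ℝ) = Real.sqrt 2 * s := by
    rw [hs, ← Real.sqrt_mul (by norm_num : (0:ℝ) ≤ 2)]
    congr 1
    ring
  calc |Phi2prof τ₂ + Q| / -Phi2prof τ₂ ≤ (3 * A + 6) / (s / 2) :=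
      div_le_div₀ (by positivity) hnum (by positivity) hden
    _ = (6 * A + 12) * Real.sqrt 2 / Real.sqrt (m : ℝ) := by
      rw [hsm]
      have h2 : Real.sqrt 2 ≠ 0 := by positivity
      field_simp
      ring
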